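/- arXiv:math/0306166 — 2 statements merged into one kernel-verified Lean document; each statement's English description precedes it below -/
import Mathlib

section
/- Let A and B be additive induced-hereditary graph properties such that A∘B is not the class of all graphs (hence neither A nor B is). Then dec(A∘B) ≥ dec(A) + dec(B). Consequently, any factorisation of an additive induced-hereditary property P, not the class of all graphs, as a product of additive induced-hereditary factors has at most dec(P) factors. -/
/-!  Common framework: finite simple graphs on finite subsets of `ℕ`,
graph properties, `(P₁,…,Pₙ)`-partitions, products of properties,
`P`-decompositions, strict graphs, decomposability numbers, generating
sets, *-joins of copies, and the respecting notions from the paper. -/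

/-- A finite simple graph on a finite vertex set of natural numbers. -/
structure FGraph where
  verts : Finset ℕ
  Adj : ℕ → ℕ → Prop
  symm : ∀ a b, Adj a b → Adj b a
  loopless : ∀ a, ¬Adj a a
  mem_of_adj : ∀ a b, Adj a b → a ∈ verts ∧ b ∈ verts

/-- The null graph `K₀` (no vertices). -/
def nullGraph : FGraph where
  verts := ∅
  Adj _ _ := False
  symm _ _ h := h.elim
  loopless _ h := h
  mem_of_adj _ _ h := h.elim

namespace FGraph

/-- The subgraph of `G` induced by the vertex set `U`. -/
def induce (G : FGraph) (U : Finset ℕ) : FGraph where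
  verts := G.verts ∩ U
  Adj a b := G.Adj a b ∧ a ∈ U ∧ b ∈ U
  symm a b h := ⟨G.symm a b h.1, h.2.2, h.2.1⟩
  loopless a h := G.loopless a h.1
  mem_of_adj a b h := ⟨Finset.mem_inter.2 ⟨(G.mem_of_adj a b h.1).1, h.2.1⟩,
    Finset.mem_inter.2 ⟨(G.mem_of_adj a b h.1).2, h.2.2⟩⟩

/-- `φ` is an isomorphism from `G` onto `H`. -/
def IsoVia (G H : FGraph) (φ : ℕ → ℕ) : Prop :=
  Set.BijOn φ (G.verts : Set ℕ) (H.verts : Set ℕ) ∧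
    ∀ a ∈ G.verts, ∀ b ∈ G.verts, (G.Adj a b ↔ H.Adj (φ a) (φ b))

/-- `G` and `H` are isomorphic. -/
def Iso (G H : FGraph) : Prop := ∃ φ, G.IsoVia H φ

/-- `H ≤ G` : `H` is isomorphic to an induced subgraph of `G`. -/
def Le (H G : FGraph) : Prop := ∃ U ⊆ G.verts, H.Iso (G.induce U)

end FGraph

/-- `K` is the disjoint union of the family `C` of graphs. -/
def IsDisjUnion {k : ℕ} (K : FGraph) (C : Fin k → FGraph) : Prop :=
  (∀ i j, i ≠ j → Disjoint (C i).verts (C j).verts) ∧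
  K.verts = Finset.univ.biUnion (fun j => (C j).verts) ∧
  ∀ a b, K.Adj a b ↔ ∃ j, (C j).Adj a b

/-- `kG₀` : the set of graphs that are disjoint unions of `k` copies of `G₀`. -/
def kCopies (k : ℕ) (G₀ : FGraph) : Set FGraph :=
  {K | ∃ C : Fin k → FGraph, (∀ j, (C j).Iso G₀) ∧ IsDisjUnion K C}

/-- The *-join `G₁ * ⋯ * Gₙ` of a family of graphs (with pairwise disjoint
vertex sets): all graphs on the union of the vertex sets inducing each `Gᵢ`,
so that only edges joining distinct `Gᵢ`'s may be added. -/
def StarJoin {n : ℕ} (Gs : Fin n → FGraph) : Set FGraph :=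
  {H | H.verts = Finset.univ.biUnion (fun i => (Gs i).verts) ∧
    ∀ i, ∀ a ∈ (Gs i).verts, ∀ b ∈ (Gs i).verts, (H.Adj a b ↔ (Gs i).Adj a b)}

/-- `G * K₁` : the graphs obtained from `G` by adding one new vertex joined
arbitrarily to `G`. -/
def joinOne (G : FGraph) : Set FGraph :=
  {H | ∃ v, v ∉ G.verts ∧ H.verts = insert v G.verts ∧
    ∀ a ∈ G.verts, ∀ b ∈ G.verts, (H.Adj a b ↔ G.Adj a b)}

/-- A graph property: a nonempty isomorphism-closed class of graphs (it
contains the null graph, which by convention belongs to every property, and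
some graph with at least one vertex). -/
def IsProperty (P : Set FGraph) : Prop :=
  nullGraph ∈ P ∧ (∃ G ∈ P, G.verts.Nonempty) ∧
    ∀ G H, FGraph.Iso G H → G ∈ P → H ∈ P

/-- `P` is induced-hereditary. -/
def IndHer (P : Set FGraph) : Prop := ∀ G H, G ∈ P → FGraph.Le H G → H ∈ P

/-- `P` is additive: closed under disjoint unions. -/
def Additive' (P : Set FGraph) : Prop :=
  ∀ G H K : FGraph, G ∈ P → H ∈ P → IsDisjUnion K ![G, H] → K ∈ P

/-- An additive induced-hereditary graph property. -/
def IsAIH (P : Set FGraph) : Prop := IsProperty P ∧ IndHer P ∧ Additive' P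

/-- A `(P₁,…,Pₙ)`-partition of `G` (parts may be empty). -/
def IsPartitionInto {n : ℕ} (Ps : Fin n → Set FGraph) (G : FGraph)
    (V : Fin n → Finset ℕ) : Prop :=
  (∀ i j, i ≠ j → Disjoint (V i) (V j)) ∧
  Finset.univ.biUnion V = G.verts ∧
  ∀ i, G.induce (V i) ∈ Ps i

/-- The product `P₁ ∘ ⋯ ∘ Pₙ` of properties. -/
def ProdProp {n : ℕ} (Ps : Fin n → Set FGraph) : Set FGraph :=
  {G | ∃ V : Fin n → Finset ℕ, IsPartitionInto Ps G V}

/-- A `P`-decomposition of `G` with parts `V` : the parts are nonempty and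
partition `V(G)`, and for every `k ≥ 1` every graph in
`kG[V₁] * ⋯ * kG[Vₙ]` belongs to `P`. -/
def IsDecomp (P : Set FGraph) (G : FGraph) {n : ℕ} (V : Fin n → Finset ℕ) : Prop :=
  (∀ i, (V i).Nonempty) ∧
  (∀ i j, i ≠ j → Disjoint (V i) (V j)) ∧
  Finset.univ.biUnion V = G.verts ∧
  ∀ k : ℕ, 0 < k → ∀ A : Fin n → FGraph,
    (∀ i, A i ∈ kCopies k (G.induce (V i))) →
    (∀ i j, i ≠ j → Disjoint (A i).verts (A j).verts) →
    ∀ H ∈ StarJoin A, H ∈ P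

/-- `dec_P(G)` : the maximum number of parts of a `P`-decomposition of `G`
(`0` if there is none). -/
noncomputable def decP (P : Set FGraph) (G : FGraph) : ℕ :=
  sSup {n | ∃ V : Fin n → Finset ℕ, IsDecomp P G V}

/-- `G` is `P`-strict : `G ∈ P` but some graph in `G * K₁` is not in `P`. -/
def Strict (P : Set FGraph) (G : FGraph) : Prop :=
  G ∈ P ∧ ∃ H ∈ joinOne G, H ∉ P

/-- `dec(P) = min { dec_P(G) : G ∈ S(P) }`. -/
noncomputable def decOf (P : Set FGraph) : ℕ :=
  sInf (decP P '' {G | Strict P G})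

/-- `dec_P(𝒢) = min { dec_P(G) : G ∈ 𝒢 }`. -/
noncomputable def decSet (P 𝒢 : Set FGraph) : ℕ := sInf (decP P '' 𝒢)

/-- `⟨𝒢⟩` : the induced-hereditary property generated by `𝒢`. -/
def gen (𝒢 : Set FGraph) : Set FGraph := {G | ∃ H ∈ 𝒢, FGraph.Le G H}

/-- `𝒢` is a generating set for `P`. -/
def Generates (𝒢 P : Set FGraph) : Prop := gen 𝒢 = P

/-- `G` is uniquely `P`-decomposable: it has exactly one `P`-decomposition
(as an unordered partition) with `dec_P(G)` parts. -/
def UniquelyDecomposable (P : Set FGraph) (G : FGraph) : Prop :=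
  (∃ V : Fin (decP P G) → Finset ℕ, IsDecomp P G V) ∧
  ∀ V W : Fin (decP P G) → Finset ℕ, IsDecomp P G V → IsDecomp P G W →
    ∃ σ : Equiv.Perm (Fin (decP P G)), ∀ i, W i = V (σ i)

/-- Data exhibiting `Gstar` as a member of `s ⊛ G` : `s` pairwise disjoint
copies of `G` (given by isomorphisms) whose *-join contains `Gstar`. -/
structure CopyJoin (G : FGraph) (s : ℕ) (Gstar : FGraph) where
  copies : Fin s → FGraph
  maps : Fin s → ℕ → ℕ
  iso : ∀ k, G.IsoVia (copies k) (maps k)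
  disj : ∀ k l, k ≠ l → Disjoint (copies k).verts (copies l).verts
  mem : Gstar ∈ StarJoin copies

/-- `Gstar ∈ s ⊛ G` respects `d₀ = (U₁,…,Uₘ)` : every added edge between two
different copies of `G` meets (copies of) two different `Uⱼ`'s, i.e. there is
no edge between the copies of the same `Uⱼ` in two different copies of `G`. -/
def CopyJoin.RespectsJoin {G : FGraph} {s : ℕ} {Gstar : FGraph}
    (cj : CopyJoin G s Gstar) {m : ℕ} (U : Fin m → Finset ℕ) : Prop :=
  ∀ k l : Fin s, k ≠ l → ∀ j : Fin m, ∀ a ∈ (U j).image (cj.maps k),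
    ∀ b ∈ (U j).image (cj.maps l), ¬Gstar.Adj a b

/-- A partition `V` of `Gstar ∈ s ⊛ G` respects `d₀ = (U₁,…,Uₘ)` uniformly:
for each part `Vᵢ` there is a single `Uⱼ` such that in every copy `Gᵏ`,
`Vᵢ ∩ V(Gᵏ)` is contained in the copy of `Uⱼ`. -/
def CopyJoin.RespectsUniformly {G : FGraph} {s : ℕ} {Gstar : FGraph}
    (cj : CopyJoin G s Gstar) {n m : ℕ}
    (V : Fin n → Finset ℕ) (U : Fin m → Finset ℕ) : Prop :=
  ∀ i, ∃ j, ∀ k, V i ∩ (cj.copies k).verts ⊆ (U j).image (cj.maps k)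

/-- An irreducible additive induced-hereditary property: one that is not the
product of two additive induced-hereditary properties. -/
def IrredProp (P : Set FGraph) : Prop :=
  IsAIH P ∧ ¬∃ Q R : Set FGraph, IsAIH Q ∧ IsAIH R ∧ P = ProdProp ![Q, R]

/-!
If `G` is `(A∘B)`-strict with an `(A, B)`-partition `(X, Y)`, then `G[X]` is `A`-strict and `G[Y]`
is `B`-strict: a new vertex that takes `G` out of `A∘B` cannot be added to either part.
Concatenating a maximal `A`-decomposition of `G[X]` with a maximal `B`-decomposition of `G[Y]`
gives an `(A∘B)`-decomposition of `G`, since in every graph of the corresponding *-join the copies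
of the parts of `X` induce a graph of `A` and those of `Y` a graph of `B`. Hence
`dec_{A∘B}(G) ≥ dec(A) + dec(B)` for every strict `G`. The bound on the number of factors follows
by splitting off the first factor, because `dec(P) ≥ 1` whenever `P` is not the class of all graphs.
-/

theorem Finset.biUnion_fin_two {α : Type*} [DecidableEq α] (f : Fin 2 → Finset α) :
    Finset.univ.biUnion f = f 0 ∪ f 1 := by
  ext; simp [Fin.exists_fin_two]

theorem Finset.biUnion_fin_succ {α : Type*} [DecidableEq α] {n : ℕ}
    (f : Fin (n + 1) → Finset α) :
    Finset.univ.biUnion f = f 0 ∪ Finset.univ.biUnion fun i : Fin n => f i.succ := by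
  ext; simp [Fin.exists_fin_succ]

theorem Finset.biUnion_fin_add {α : Type*} [DecidableEq α] {p q : ℕ}
    (f : Fin (p + q) → Finset α) :
    Finset.univ.biUnion f = (Finset.univ.biUnion fun i => f (Fin.castAdd q i)) ∪
      Finset.univ.biUnion fun j => f (Fin.natAdd p j) := by
  ext x
  simp only [Finset.mem_biUnion, Finset.mem_univ, true_and, Finset.mem_union]
  constructor
  · rintro ⟨i, hi⟩
    induction i using Fin.addCases with
    | left i => exact .inl ⟨i, hi⟩
    | right j => exact .inr ⟨j, hi⟩
  · rintro (⟨i, hi⟩ | ⟨j, hj⟩) <;> exact ⟨_, ‹_›⟩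

namespace FGraph

theorem ext_of_adj_iff {G H : FGraph} (hv : G.verts = H.verts)
    (ha : ∀ a ∈ G.verts, ∀ b ∈ G.verts, (G.Adj a b ↔ H.Adj a b)) : G = H := by
  obtain ⟨V, R, _, _, hR⟩ := G
  obtain ⟨W, S, _, _, hS⟩ := H
  obtain rfl : V = W := hv
  obtain rfl : R = S := by
    funext a b
    refine propext ⟨fun h => ?_, fun h => ?_⟩
    · exact (ha a (hR a b h).1 b (hR a b h).2).1 h
    · exact (ha a (hS a b h).1 b (hS a b h).2).2 h
  rfl

@[simp] theorem induce_verts (G : FGraph) (U : Finset ℕ) :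
    (G.induce U).verts = G.verts ∩ U := rfl

@[simp] theorem induce_adj (G : FGraph) (U : Finset ℕ) (a b : ℕ) :
    (G.induce U).Adj a b ↔ G.Adj a b ∧ a ∈ U ∧ b ∈ U := Iff.rfl

theorem induce_verts_of_subset (G : FGraph) {U : Finset ℕ} (h : U ⊆ G.verts) :
    (G.induce U).verts = U :=
  Finset.inter_eq_right.mpr h

theorem induce_induce (G : FGraph) (S T : Finset ℕ) :
    (G.induce S).induce T = G.induce (S ∩ T) :=
  ext_of_adj_iff (by simp [Finset.inter_assoc]) fun a _ b _ => by
    simp only [induce_adj, Finset.mem_inter]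
    tauto

theorem induce_comm (G : FGraph) (S T : Finset ℕ) :
    (G.induce S).induce T = (G.induce T).induce S := by
  rw [induce_induce, induce_induce, Finset.inter_comm]

theorem induce_induce_of_subset (G : FGraph) {S T : Finset ℕ} (h : T ⊆ S) :
    (G.induce S).induce T = G.induce T := by
  rw [induce_induce, Finset.inter_eq_right.mpr h]

theorem induce_self (G : FGraph) : G.induce G.verts = G :=
  ext_of_adj_iff (by simp) fun a _ b _ => by simpa using G.mem_of_adj a b

theorem induce_inter_verts (G : FGraph) (U : Finset ℕ) :
    G.induce (G.verts ∩ U) = G.induce U := by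
  rw [← induce_induce, induce_self]

theorem isoVia_id (G : FGraph) : G.IsoVia G id :=
  ⟨Set.bijOn_id _, fun _ _ _ _ => Iff.rfl⟩

theorem Iso.symm {G H : FGraph} (h : G.Iso H) : H.Iso G := by
  classical
  obtain ⟨φ, hbij, hadj⟩ := h
  have hinv : Set.InvOn (Function.invFunOn φ G.verts) φ G.verts H.verts :=
    hbij.invOn_invFunOn
  have hψ := hbij.symm hinv.symm
  refine ⟨Function.invFunOn φ G.verts, hψ, fun a ha b hb => ?_⟩
  have := hadj _ (hψ.mapsTo ha) _ (hψ.mapsTo hb)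
  rwa [hinv.2 ha, hinv.2 hb, Iff.comm] at this

theorem iso_of_verts_eq_singleton {G H : FGraph} {v w : ℕ} (hG : G.verts = {v})
    (hH : H.verts = {w}) : G.Iso H := by
  refine ⟨fun _ => w, ?_, fun a ha b hb => ?_⟩
  · simp [hG, hH]
  · rw [hG, Finset.mem_singleton] at ha hb
    subst ha hb
    exact iff_of_false (G.loopless _) (H.loopless w)

theorem IsoVia.induce_filter {H K : FGraph} {ψ : ℕ → ℕ} (h : H.IsoVia K ψ)
    (X : Finset ℕ) :
    (H.induce (H.verts.filter (ψ · ∈ X))).IsoVia (K.induce X) ψ := by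
  have hs : ((H.induce (H.verts.filter (ψ · ∈ X))).verts : Set ℕ) =
      ↑H.verts ∩ ψ ⁻¹' ↑X := by
    ext; simp
  have ht : ((K.induce X).verts : Set ℕ) = ψ '' (↑H.verts ∩ ψ ⁻¹' ↑X) := by
    rw [Set.image_inter_preimage, h.1.image_eq]; simp
  refine ⟨hs ▸ ht ▸ (h.1.injOn.mono Set.inter_subset_left).bijOn_image, fun a ha b hb => ?_⟩
  simp only [induce_verts, Finset.mem_inter, Finset.mem_filter] at ha hb
  simp [ha.1, hb.1, ha.2.2, hb.2.2, h.2 a ha.1 b hb.1]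

theorem mem_joinOne_induce_erase (H : FGraph) {v : ℕ} (hv : v ∈ H.verts) :
    H ∈ joinOne (H.induce (H.verts.erase v)) := by
  have hsub := H.induce_verts_of_subset (Finset.erase_subset v H.verts)
  refine ⟨v, by simp, by rw [hsub, Finset.insert_erase hv], fun a ha b hb => ?_⟩
  rw [hsub] at ha hb
  simp [ha, hb]

end FGraph

theorem IsProperty.mem_of_verts_eq_empty {P : Set FGraph} (hP : IsProperty P) {G : FGraph}
    (h : G.verts = ∅) : G ∈ P :=
  hP.2.2 nullGraph G ⟨id, by simp [nullGraph, h], fun a ha => by simp [nullGraph] at ha⟩ hP.1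

namespace IndHer

variable {P : Set FGraph}

theorem mem_of_isoVia_induce (hP : IndHer P) {G H : FGraph} {U : Finset ℕ} {ψ : ℕ → ℕ}
    (hG : G ∈ P) (h : H.IsoVia (G.induce U) ψ) : H ∈ P :=
  hP G H hG ⟨G.verts ∩ U, Finset.inter_subset_left, ψ, by rwa [FGraph.induce_inter_verts]⟩

theorem mem_of_iso (hP : IndHer P) {G H : FGraph} (hG : G ∈ P) (h : H.Iso G) : H ∈ P := by
  obtain ⟨ψ, hψ⟩ := h
  exact hP.mem_of_isoVia_induce (U := G.verts) hG (by rwa [FGraph.induce_self])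

theorem induce_mem (hP : IndHer P) {G : FGraph} (hG : G ∈ P) (U : Finset ℕ) :
    G.induce U ∈ P :=
  hP.mem_of_isoVia_induce hG (FGraph.isoVia_id _)

theorem mem_of_verts_eq_singleton (hP : IndHer P) (hprop : IsProperty P) {H : FGraph} {v : ℕ}
    (hH : H.verts = {v}) : H ∈ P := by
  obtain ⟨G, hG, w, hw⟩ := hprop.2.1
  exact hP.mem_of_iso (hP.induce_mem hG {w})
    (FGraph.iso_of_verts_eq_singleton hH (Finset.inter_singleton_of_mem hw))

end IndHer

theorem isDisjUnion_pair_iff {K G H : FGraph} :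
    IsDisjUnion K ![G, H] ↔ Disjoint G.verts H.verts ∧ K.verts = G.verts ∪ H.verts ∧
      ∀ a b, K.Adj a b ↔ G.Adj a b ∨ H.Adj a b := by
  simp [IsDisjUnion, Fin.forall_fin_two, Fin.exists_fin_two, Finset.biUnion_fin_two, disjoint_comm]

theorem FGraph.isDisjUnion_induce_union (K : FGraph) {X Y : Finset ℕ} (hXY : Disjoint X Y)
    (hsep : ∀ a ∈ X, ∀ b ∈ Y, ¬K.Adj a b) :
    IsDisjUnion (K.induce (X ∪ Y)) ![K.induce X, K.induce Y] := by
  refine isDisjUnion_pair_iff.2 ⟨hXY.mono Finset.inter_subset_right Finset.inter_subset_right,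
    Finset.inter_union_distrib_left _ _ _, fun a b => ?_⟩
  have hab := hsep a
  have hba := hsep b
  have := K.symm a b
  simp only [induce_adj, Finset.mem_union]
  tauto

theorem Additive'.induce_union_mem {P : Set FGraph} (hP : Additive' P) {K : FGraph}
    {X Y : Finset ℕ} (hX : K.induce X ∈ P) (hY : K.induce Y ∈ P) (hXY : Disjoint X Y)
    (hsep : ∀ a ∈ X, ∀ b ∈ Y, ¬K.Adj a b) : K.induce (X ∪ Y) ∈ P :=
  hP _ _ _ hX hY (K.isDisjUnion_induce_union hXY hsep)

namespace IsDisjUnion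

variable {k : ℕ} {K : FGraph} {C : Fin k → FGraph}

theorem eq_of_mem (hK : IsDisjUnion K C) {i j : Fin k} {a : ℕ} (hi : a ∈ (C i).verts)
    (hj : a ∈ (C j).verts) : i = j :=
  by_contra fun h => Finset.disjoint_left.1 (hK.1 i j h) hi hj

theorem induce_verts (hK : IsDisjUnion K C) (j : Fin k) : K.induce (C j).verts = C j := by
  refine FGraph.ext_of_adj_iff (K.induce_verts_of_subset ?_) fun a _ b _ => ?_
  · rw [hK.2.1]; exact Finset.subset_biUnion_of_mem (fun i => (C i).verts) (Finset.mem_univ j)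
  · simp only [FGraph.induce_adj, hK.2.2]
    constructor
    · rintro ⟨⟨i, hi⟩, haj, -⟩
      rwa [hK.eq_of_mem ((C i).mem_of_adj a b hi).1 haj] at hi
    · exact fun h => ⟨⟨j, h⟩, (C j).mem_of_adj a b h⟩

theorem mem {P : Set FGraph} (hP : IsProperty P) (hadd : Additive' P) (hK : IsDisjUnion K C)
    (hC : ∀ j, C j ∈ P) : K ∈ P := by
  classical
  suffices ∀ s : Finset (Fin k), K.induce (s.biUnion fun j => (C j).verts) ∈ P by
    simpa [← hK.2.1, FGraph.induce_self] using this Finset.univ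
  intro s
  induction s using Finset.induction_on with
  | empty => exact hP.mem_of_verts_eq_empty (by simp)
  | insert j s hj ih =>
    rw [Finset.biUnion_insert]
    have hdisj : Disjoint (C j).verts (s.biUnion fun j => (C j).verts) :=
      (Finset.disjoint_biUnion_right _ _ _).2 fun i hi => hK.1 j i (ne_of_mem_of_not_mem hi hj).symm
    refine hadd.induce_union_mem (by rw [hK.induce_verts]; exact hC j) ih hdisj ?_
    intro a ha b hb hab
    obtain ⟨i, hi⟩ := (hK.2.2 a b).1 hab
    obtain ⟨i', hi', hb'⟩ := Finset.mem_biUnion.1 hb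
    obtain rfl := hK.eq_of_mem ((C i).mem_of_adj a b hi).1 ha
    obtain rfl := hK.eq_of_mem ((C i).mem_of_adj a b hi).2 hb'
    exact hj hi'

end IsDisjUnion

theorem IsAIH.mem_of_mem_kCopies {P : Set FGraph} (hP : IsAIH P) {G K : FGraph} {k : ℕ}
    (hG : G ∈ P) (hK : K ∈ kCopies k G) : K ∈ P := by
  obtain ⟨C, hC, hK⟩ := hK
  exact hK.mem hP.1 hP.2.2 fun j => hP.2.1.mem_of_iso hG (hC j)

theorem exists_strict {P : Set FGraph} (hP : IsProperty P) (hne : P ≠ Set.univ) :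
    ∃ G, Strict P G := by
  obtain ⟨H₀, hH₀⟩ := (Set.ne_univ_iff_exists_notMem P).1 hne
  obtain ⟨H, hH, hmin⟩ :=
    (measure fun H : FGraph => H.verts.card).wf.has_min {H | H ∉ P} ⟨H₀, hH₀⟩
  obtain ⟨v, hv⟩ := Finset.nonempty_iff_ne_empty.2 fun h => hH (hP.mem_of_verts_eq_empty h)
  refine ⟨H.induce (H.verts.erase v), not_not.1 fun hG => hmin _ hG ?_, H,
    H.mem_joinOne_induce_erase hv, hH⟩
  show (H.induce _).verts.card < H.verts.card
  rw [H.induce_verts_of_subset (Finset.erase_subset v H.verts)]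
  exact Finset.card_erase_lt_of_mem hv

theorem Strict.verts_nonempty {P : Set FGraph} (hP : IsProperty P) (hher : IndHer P)
    {G : FGraph} (h : Strict P G) : G.verts.Nonempty := by
  obtain ⟨-, H, ⟨v, -, hH, -⟩, hHP⟩ := h
  refine Finset.nonempty_iff_ne_empty.2 fun hG => hHP ?_
  exact hher.mem_of_verts_eq_singleton hP (v := v) (by simp [hH, hG])

theorem IsPartitionInto.subset {n : ℕ} {Ps : Fin n → Set FGraph} {G : FGraph}
    {V : Fin n → Finset ℕ} (hV : IsPartitionInto Ps G V) (i : Fin n) : V i ⊆ G.verts :=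
  hV.2.1 ▸ Finset.subset_biUnion_of_mem V (Finset.mem_univ i)

theorem mem_prodProp_cons_iff {n : ℕ} {P : Set FGraph} {Qs : Fin n → Set FGraph} {G : FGraph} :
    G ∈ ProdProp (Fin.cons P Qs) ↔ ∃ X Y, Disjoint X Y ∧ X ∪ Y = G.verts ∧
      G.induce X ∈ P ∧ G.induce Y ∈ ProdProp Qs := by
  constructor
  · rintro ⟨V, hd, hu, hm⟩
    set Y := Finset.univ.biUnion fun i : Fin n => V i.succ
    have hcover : V 0 ∪ Y = G.verts := by rw [← hu, Finset.biUnion_fin_succ]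
    have hY : Y ⊆ G.verts := hcover ▸ Finset.subset_union_right
    refine ⟨V 0, Y, (Finset.disjoint_biUnion_right _ _ _).2 fun i _ =>
      hd 0 i.succ (Fin.succ_ne_zero i).symm, hcover, hm 0,
      fun i => V i.succ, fun i j h => hd _ _ (Fin.succ_injective _ |>.ne h),
      (G.induce_verts_of_subset hY).symm, fun i => ?_⟩
    rw [G.induce_induce_of_subset
      (Finset.subset_biUnion_of_mem (fun i => V i.succ) (Finset.mem_univ i))]
    exact hm i.succ
  · rintro ⟨X, Y, hXY, hu, hX, W, hWd, hWu, hWm⟩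
    have hY : Y ⊆ G.verts := hu ▸ Finset.subset_union_right
    have hWY : ∀ i, W i ⊆ Y := fun i =>
      (IsPartitionInto.subset ⟨hWd, hWu, hWm⟩ i).trans Finset.inter_subset_right
    refine ⟨Fin.cons X W, fun i j hij => ?_, ?_, fun i => ?_⟩
    · induction i using Fin.cases <;> induction j using Fin.cases
      · exact absurd rfl hij
      · exact hXY.mono_right (hWY _)
      · exact (hXY.mono_right (hWY _)).symm
      · exact hWd _ _ fun h => hij (congrArg Fin.succ h)
    · simp only [Finset.biUnion_fin_succ, Fin.cons_zero, Fin.cons_succ, hWu,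
        G.induce_verts_of_subset hY, hu]
    · induction i using Fin.cases
      · exact hX
      · simp only [Fin.cons_succ]
        rw [← G.induce_induce_of_subset (hWY _)]
        exact hWm _

theorem prodProp_fin_one (Qs : Fin 1 → Set FGraph) : ProdProp Qs = Qs 0 := by
  ext G
  constructor
  · rintro ⟨V, -, hu, hm⟩
    have : V 0 = G.verts := by simpa using hu
    simpa [this, FGraph.induce_self] using hm 0
  · intro hG
    refine ⟨fun _ => G.verts, fun i j h => absurd (Subsingleton.elim i j) h, by simp,
      fun i => ?_⟩
    rw [Subsingleton.elim i 0, FGraph.induce_self]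
    exact hG

theorem mem_prodProp_pair_iff {P Q : Set FGraph} {G : FGraph} :
    G ∈ ProdProp ![P, Q] ↔ ∃ X Y, Disjoint X Y ∧ X ∪ Y = G.verts ∧
      G.induce X ∈ P ∧ G.induce Y ∈ Q := by
  rw [Matrix.vecCons, mem_prodProp_cons_iff, prodProp_fin_one]
  rfl

theorem prodProp_eq_pair {n : ℕ} (Qs : Fin (n + 1) → Set FGraph) :
    ProdProp Qs = ProdProp ![Qs 0, ProdProp (Fin.tail Qs)] := by
  ext G
  conv_lhs => rw [← Fin.cons_self_tail Qs]
  rw [mem_prodProp_cons_iff, mem_prodProp_pair_iff]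

theorem prodProp_comm (P Q : Set FGraph) : ProdProp ![P, Q] = ProdProp ![Q, P] := by
  ext G
  simp only [mem_prodProp_pair_iff]
  constructor <;>
    exact fun ⟨X, Y, h, hu, hX, hY⟩ => ⟨Y, X, h.symm, Finset.union_comm X Y ▸ hu, hY, hX⟩

theorem subset_prodProp_pair_left {P Q : Set FGraph} (hQ : IsProperty Q) :
    P ⊆ ProdProp ![P, Q] :=
  fun G hG => mem_prodProp_pair_iff.2 ⟨G.verts, ∅, Finset.disjoint_empty_right _,
    Finset.union_empty _, by rwa [FGraph.induce_self], hQ.mem_of_verts_eq_empty (by simp)⟩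

theorem subset_prodProp_pair_right {P Q : Set FGraph} (hP : IsProperty P) :
    Q ⊆ ProdProp ![P, Q] :=
  prodProp_comm Q P ▸ subset_prodProp_pair_left hP

theorem IndHer.prodProp_pair {P Q : Set FGraph} (hP : IndHer P) (hQ : IndHer Q) :
    IndHer (ProdProp ![P, Q]) := by
  rintro G H hG ⟨U, -, ψ, hψ⟩
  obtain ⟨X, Y, hXY, hu, hX, hY⟩ := mem_prodProp_pair_iff.1 hG
  refine mem_prodProp_pair_iff.2 ⟨H.verts.filter (ψ · ∈ X), H.verts.filter (ψ · ∈ Y),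
    Finset.disjoint_filter.2 fun x _ hx hy => Finset.disjoint_left.1 hXY hx hy, ?_,
    hP.mem_of_isoVia_induce hX (U := U) (ψ := ψ) ?_,
    hQ.mem_of_isoVia_induce hY (U := U) (ψ := ψ) ?_⟩
  · rw [← Finset.filter_or, Finset.filter_true_of_mem]
    intro x hx
    have : ψ x ∈ G.verts := Finset.mem_of_mem_inter_left (hψ.1.mapsTo hx)
    rwa [← hu, Finset.mem_union] at this
  · rw [← FGraph.induce_comm]; exact hψ.induce_filter X
  · rw [← FGraph.induce_comm]; exact hψ.induce_filter Y

theorem Additive'.induce_union_mem_of_isDisjUnion {P : Set FGraph} (hP : Additive' P)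
    {G H K : FGraph} (hK : IsDisjUnion K ![G, H]) {X Y : Finset ℕ} (hX : X ⊆ G.verts)
    (hY : Y ⊆ H.verts) (hGX : G.induce X ∈ P) (hHY : H.induce Y ∈ P) :
    K.induce (X ∪ Y) ∈ P := by
  obtain ⟨hGH, -, hadj⟩ := isDisjUnion_pair_iff.1 hK
  have hKG : K.induce G.verts = G := hK.induce_verts 0
  have hKH : K.induce H.verts = H := hK.induce_verts 1
  refine hP.induce_union_mem ?_ ?_ (hGH.mono hX hY) fun a ha b hb hab => ?_
  · rwa [← K.induce_induce_of_subset hX, hKG]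
  · rwa [← K.induce_induce_of_subset hY, hKH]
  · rcases (hadj a b).1 hab with h | h
    · exact Finset.disjoint_left.1 hGH (G.mem_of_adj a b h).2 (hY hb)
    · exact Finset.disjoint_left.1 hGH (hX ha) (H.mem_of_adj a b h).1

theorem Additive'.prodProp_pair {P Q : Set FGraph} (hP : Additive' P) (hQ : Additive' Q) :
    Additive' (ProdProp ![P, Q]) := by
  intro G H K hG hH hK
  obtain ⟨X, Y, hXY, hu, hX, hY⟩ := mem_prodProp_pair_iff.1 hG
  obtain ⟨X', Y', hXY', hu', hX', hY'⟩ := mem_prodProp_pair_iff.1 hH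
  obtain ⟨hGH, hKv, -⟩ := isDisjUnion_pair_iff.1 hK
  have hXG : X ⊆ G.verts := hu ▸ Finset.subset_union_left
  have hYG : Y ⊆ G.verts := hu ▸ Finset.subset_union_right
  have hXH : X' ⊆ H.verts := hu' ▸ Finset.subset_union_left
  have hYH : Y' ⊆ H.verts := hu' ▸ Finset.subset_union_right
  refine mem_prodProp_pair_iff.2 ⟨X ∪ X', Y ∪ Y', ?_, ?_,
    hP.induce_union_mem_of_isDisjUnion hK hXG hXH hX hX',
    hQ.induce_union_mem_of_isDisjUnion hK hYG hYH hY hY'⟩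
  · simp only [Finset.disjoint_union_left, Finset.disjoint_union_right]
    exact ⟨⟨hXY, (hGH.mono hYG hXH).symm⟩, hGH.mono hXG hYH, hXY'⟩
  · rw [Finset.union_union_union_comm, hu, hu', hKv]

theorem isAIH_prodProp_pair {P Q : Set FGraph} (hP : IsAIH P) (hQ : IsAIH Q) :
    IsAIH (ProdProp ![P, Q]) := by
  have hher := hP.2.1.prodProp_pair hQ.2.1
  obtain ⟨G, hG, hne⟩ := hP.1.2.1
  exact ⟨⟨subset_prodProp_pair_left hQ.1 hP.1.1,
    ⟨G, subset_prodProp_pair_left hQ.1 hG, hne⟩, fun G H h hG => hher.mem_of_iso hG h.symm⟩,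
    hher, hP.2.2.prodProp_pair hQ.2.2⟩

theorem isAIH_prodProp : ∀ {n : ℕ} (Qs : Fin (n + 1) → Set FGraph), (∀ i, IsAIH (Qs i)) →
    IsAIH (ProdProp Qs)
  | 0, Qs, h => prodProp_fin_one Qs ▸ h 0
  | _ + 1, Qs, h => prodProp_eq_pair Qs ▸
      isAIH_prodProp_pair (h 0) (isAIH_prodProp _ fun i => h i.succ)

theorem eq_of_mem_starJoin_fin_one {Af : Fin 1 → FGraph} {H : FGraph} (hH : H ∈ StarJoin Af) :
    H = Af 0 := by
  have hv : H.verts = (Af 0).verts := by rw [hH.1]; simp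
  exact FGraph.ext_of_adj_iff hv fun a ha b hb => hH.2 0 a (hv ▸ ha) b (hv ▸ hb)

theorem induce_biUnion_mem_starJoin {n m : ℕ} {Af : Fin n → FGraph} {H : FGraph}
    (hH : H ∈ StarJoin Af) (e : Fin m → Fin n) :
    H.induce (Finset.univ.biUnion fun j => (Af (e j)).verts) ∈ StarJoin fun j => Af (e j) := by
  have hS : (Finset.univ.biUnion fun j => (Af (e j)).verts) ⊆ H.verts := by
    rw [hH.1]
    exact Finset.biUnion_subset.2 fun j _ =>
      Finset.subset_biUnion_of_mem (fun i => (Af i).verts) (Finset.mem_univ (e j))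
  refine ⟨H.induce_verts_of_subset hS, fun j a ha b hb => ?_⟩
  have hmem : ∀ x ∈ (Af (e j)).verts, x ∈ Finset.univ.biUnion fun j => (Af (e j)).verts :=
    fun x hx => Finset.mem_biUnion.2 ⟨j, Finset.mem_univ j, hx⟩
  simp [hmem a ha, hmem b hb, hH.2 (e j) a ha b hb]

theorem isDecomp_single {P : Set FGraph} (hP : IsAIH P) {G : FGraph} (hG : G ∈ P)
    (hne : G.verts.Nonempty) : IsDecomp P G fun _ : Fin 1 => G.verts := by
  refine ⟨fun _ => hne, fun i j h => absurd (Subsingleton.elim i j) h, by simp,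
    fun k _ Af hAf _ H hH => ?_⟩
  rw [eq_of_mem_starJoin_fin_one hH]
  exact hP.mem_of_mem_kCopies hG (G.induce_self ▸ hAf 0)

theorem bddAbove_isDecomp (P : Set FGraph) (G : FGraph) :
    BddAbove {n | ∃ V : Fin n → Finset ℕ, IsDecomp P G V} := by
  refine ⟨G.verts.card, ?_⟩
  rintro n ⟨V, hne, hd, hu, -⟩
  simpa [hu] using Finset.card_le_card_biUnion (s := Finset.univ)
    (fun i _ j _ h => hd i j h) (fun i _ => hne i)

theorem le_decP {P : Set FGraph} {G : FGraph} {n : ℕ} {V : Fin n → Finset ℕ}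
    (h : IsDecomp P G V) : n ≤ decP P G :=
  le_csSup (bddAbove_isDecomp P G) ⟨V, h⟩

theorem exists_isDecomp_decP {P : Set FGraph} (hP : IsAIH P) {G : FGraph} (hG : G ∈ P)
    (hne : G.verts.Nonempty) : ∃ V : Fin (decP P G) → Finset ℕ, IsDecomp P G V :=
  Nat.sSup_mem (s := {n | ∃ V : Fin n → Finset ℕ, IsDecomp P G V})
    ⟨1, _, isDecomp_single hP hG hne⟩ (bddAbove_isDecomp P G)

theorem decOf_le_decP {P : Set FGraph} {G : FGraph} (h : Strict P G) : decOf P ≤ decP P G :=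
  Nat.sInf_le ⟨G, h, rfl⟩

theorem one_le_decOf {P : Set FGraph} (hP : IsAIH P) (hne : P ≠ Set.univ) : 1 ≤ decOf P := by
  obtain ⟨G₀, hG₀⟩ := exists_strict hP.1 hne
  refine le_csInf ⟨_, G₀, hG₀, rfl⟩ ?_
  rintro _ ⟨G, hG, rfl⟩
  exact le_decP (isDecomp_single hP hG.1 (hG.verts_nonempty hP.1 hP.2.1))

theorem IsDecomp.subset {P : Set FGraph} {G : FGraph} {n : ℕ} {V : Fin n → Finset ℕ}
    (h : IsDecomp P G V) (i : Fin n) : V i ⊆ G.verts :=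
  h.2.2.1 ▸ Finset.subset_biUnion_of_mem V (Finset.mem_univ i)

theorem IsDecomp.append {A B : Set FGraph} {G : FGraph} {X Y : Finset ℕ} {p q : ℕ}
    {U : Fin p → Finset ℕ} {W : Fin q → Finset ℕ}
    (hU : IsDecomp A (G.induce X) U) (hW : IsDecomp B (G.induce Y) W)
    (hXY : Disjoint X Y) (hcover : X ∪ Y = G.verts) :
    IsDecomp (ProdProp ![A, B]) G (Fin.append U W) := by
  have hUX : ∀ i, U i ⊆ X := fun i => (hU.subset i).trans Finset.inter_subset_right
  have hWY : ∀ j, W j ⊆ Y := fun j => (hW.subset j).trans Finset.inter_subset_right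
  refine ⟨Fin.addCases (by simpa using hU.1) (by simpa using hW.1), fun i j hij => ?_, ?_,
    fun k hk Af hAf hdisj H hH => ?_⟩
  · induction i using Fin.addCases <;> induction j using Fin.addCases <;>
      simp only [Fin.append_left, Fin.append_right]
    · exact hU.2.1 _ _ fun h => hij (congrArg _ h)
    · exact hXY.mono (hUX _) (hWY _)
    · exact (hXY.mono (hUX _) (hWY _)).symm
    · exact hW.2.1 _ _ fun h => hij (congrArg _ h)
  · rw [Finset.biUnion_fin_add]
    simp only [Fin.append_left, Fin.append_right]
    rw [hU.2.2.1, hW.2.2.1, G.induce_verts_of_subset (hcover ▸ Finset.subset_union_left),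
      G.induce_verts_of_subset (hcover ▸ Finset.subset_union_right), hcover]
  refine mem_prodProp_pair_iff.2 ⟨_, _, ?_, (Finset.biUnion_fin_add _).symm.trans hH.1.symm,
    hU.2.2.2 k hk _ (fun i => ?_) (fun i j h => hdisj _ _ ((Fin.castAdd_injective p q).ne h))
      _ (induce_biUnion_mem_starJoin hH _),
    hW.2.2.2 k hk _ (fun j => ?_) (fun i j h => hdisj _ _ ((Fin.natAdd_injective q p).ne h))
      _ (induce_biUnion_mem_starJoin hH _)⟩
  · refine (Finset.disjoint_biUnion_left _ _ _).2 fun i _ =>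
      (Finset.disjoint_biUnion_right _ _ _).2 fun j _ => hdisj _ _ ?_
    exact ne_of_lt (Fin.lt_def.2 (by simp only [Fin.val_castAdd, Fin.val_natAdd]; omega))
  · simpa [G.induce_induce_of_subset (hUX i)] using hAf (Fin.castAdd q i)
  · simpa [G.induce_induce_of_subset (hWY j)] using hAf (Fin.natAdd p j)

theorem Strict.induce_left {A B : Set FGraph} {G : FGraph} (hG : Strict (ProdProp ![A, B]) G)
    {X Y : Finset ℕ} (hXY : Disjoint X Y) (hcover : X ∪ Y = G.verts) (hX : G.induce X ∈ A)
    (hY : G.induce Y ∈ B) : Strict A (G.induce X) := by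
  obtain ⟨-, H, ⟨v, hv, hH, hadj⟩, hHAB⟩ := hG
  have hXG : X ⊆ G.verts := hcover ▸ Finset.subset_union_left
  have hYG : Y ⊆ G.verts := hcover ▸ Finset.subset_union_right
  have hGX := G.induce_verts_of_subset hXG
  refine ⟨hX, H.induce (insert v X), ⟨v, fun h => hv (hXG (hGX ▸ h)), ?_, ?_⟩,
    fun hvX => hHAB ?_⟩
  · rw [hGX, H.induce_verts_of_subset (hH ▸ Finset.insert_subset_insert v hXG)]
  · intro a ha b hb
    rw [hGX] at ha hb
    simp [ha, hb, hadj a (hXG ha) b (hXG hb)]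
  -- otherwise `(insert v X, Y)` would be an `(A, B)`-partition of `H`
  have hHY : H.induce Y = G.induce Y :=
    FGraph.ext_of_adj_iff (by simp [hH, Finset.insert_inter_of_notMem fun h => hv (hYG h)])
      fun a ha b hb => by
        simp only [FGraph.induce_verts, Finset.mem_inter] at ha hb
        simp [hadj a (hYG ha.2) b (hYG hb.2)]
  refine mem_prodProp_pair_iff.2 ⟨insert v X, Y, ?_, ?_, hvX, hHY ▸ hY⟩
  · exact Finset.disjoint_insert_left.2 ⟨fun h => hv (hYG h), hXY⟩
  · rw [hH, ← hcover, Finset.insert_union]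

theorem Strict.induce_right {A B : Set FGraph} {G : FGraph} (hG : Strict (ProdProp ![A, B]) G)
    {X Y : Finset ℕ} (hXY : Disjoint X Y) (hcover : X ∪ Y = G.verts) (hX : G.induce X ∈ A)
    (hY : G.induce Y ∈ B) : Strict B (G.induce Y) :=
  Strict.induce_left (prodProp_comm A B ▸ hG) hXY.symm (Finset.union_comm X Y ▸ hcover) hY hX

theorem decOf_add_decOf_le_decOf_prodProp {A B : Set FGraph} (hA : IsAIH A) (hB : IsAIH B)
    (hne : ProdProp ![A, B] ≠ Set.univ) : decOf A + decOf B ≤ decOf (ProdProp ![A, B]) := by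
  obtain ⟨G₀, hG₀⟩ := exists_strict (isAIH_prodProp_pair hA hB).1 hne
  refine le_csInf ⟨_, G₀, hG₀, rfl⟩ ?_
  rintro _ ⟨G, hG, rfl⟩
  obtain ⟨X, Y, hXY, hcover, hX, hY⟩ := mem_prodProp_pair_iff.1 hG.1
  have hsX := hG.induce_left hXY hcover hX hY
  have hsY := hG.induce_right hXY hcover hX hY
  obtain ⟨U, hU⟩ := exists_isDecomp_decP hA hX (hsX.verts_nonempty hA.1 hA.2.1)
  obtain ⟨W, hW⟩ := exists_isDecomp_decP hB hY (hsY.verts_nonempty hB.1 hB.2.1)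
  calc decOf A + decOf B ≤ decP A (G.induce X) + decP B (G.induce Y) :=
        add_le_add (decOf_le_decP hsX) (decOf_le_decP hsY)
    _ ≤ decP (ProdProp ![A, B]) G := le_decP (hU.append hW hXY hcover)

theorem le_decOf_prodProp : ∀ {r : ℕ} (Qs : Fin r → Set FGraph), (∀ i, IsAIH (Qs i)) →
    ProdProp Qs ≠ Set.univ → r ≤ decOf (ProdProp Qs)
  | 0, _, _, _ => Nat.zero_le _
  | 1, Qs, hQs, hne => by
    rw [prodProp_fin_one] at hne ⊢
    exact one_le_decOf (hQs 0) hne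
  | r + 2, Qs, hQs, hne => by
    rw [prodProp_eq_pair] at hne ⊢
    have hT := isAIH_prodProp (Fin.tail Qs) fun i => hQs i.succ
    have h0 : 1 ≤ decOf (Qs 0) := one_le_decOf (hQs 0) fun h =>
      hne (Set.univ_subset_iff.1 (h ▸ subset_prodProp_pair_left hT.1))
    have hT' : r + 1 ≤ decOf (ProdProp (Fin.tail Qs)) :=
      le_decOf_prodProp _ (fun i => hQs i.succ) fun h =>
        hne (Set.univ_subset_iff.1 (h ▸ subset_prodProp_pair_right (hQs 0).1))
    have := decOf_add_decOf_le_decOf_prodProp (hQs 0) hT hne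
    omega

theorem statement2 (A B : Set FGraph) (hA : IsAIH A) (hB : IsAIH B)
    (hne : ProdProp ![A, B] ≠ Set.univ) :
    decOf A + decOf B ≤ decOf (ProdProp ![A, B]) ∧
    ∀ P : Set FGraph, IsAIH P → P ≠ Set.univ →
      ∀ (r : ℕ) (Qs : Fin r → Set FGraph), (∀ i, IsAIH (Qs i)) →
        P = ProdProp Qs → r ≤ decOf P :=
  ⟨decOf_add_decOf_le_decOf_prodProp hA hB hne, fun _ _ hP _ Qs hQs hPQ =>
    hPQ ▸ le_decOf_prodProp Qs hQs (hPQ ▸ hP)⟩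
end

section
/- Let P be an additive induced-hereditary graph property and let 𝒢' = {G₁, G₂, …} be a generating set for P. Then 𝒢' contains a generating set {G_{k₁}, G_{k₂}, G_{k₃}, …} ⊆ 𝒢' for P which is a chain under the induced-subgraph relation: G_{k₁} ≤ G_{k₂} ≤ G_{k₃} ≤ ⋯. -/
/-!
Since `P` is additive, any two members of `P` lie in a common member (a disjoint union), so `P`,
and with it any generating set `𝒢'`, is directed under `≤`. There are only countably many
finite graphs on vertex sets in `ℕ`, so `𝒢'` is countable, and the standard construction of a
cofinal increasing sequence in a countable directed set yields the chain.
-/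

open Finset

namespace FGraph

def IsEmbedding (H G : FGraph) (φ : ℕ → ℕ) : Prop :=
  Set.InjOn φ H.verts ∧ Set.MapsTo φ H.verts G.verts ∧
    ∀ a ∈ H.verts, ∀ b ∈ H.verts, (H.Adj a b ↔ G.Adj (φ a) (φ b))

theorem le_iff_exists_isEmbedding {H G : FGraph} : H.Le G ↔ ∃ φ, H.IsEmbedding G φ := by
  constructor
  · rintro ⟨U, -, φ, hbij, hadj⟩
    have hmem : ∀ a ∈ H.verts, φ a ∈ G.verts ∧ φ a ∈ U := fun a ha =>
      mem_inter.1 (hbij.mapsTo ha)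
    exact ⟨φ, hbij.injOn, fun a ha => (hmem a ha).1, fun a ha b hb =>
      (hadj a ha b hb).trans ⟨And.left, fun h => ⟨h, (hmem a ha).2, (hmem b hb).2⟩⟩⟩
  · rintro ⟨φ, hinj, hmaps, hadj⟩
    have hsub : H.verts.image φ ⊆ G.verts := image_subset_iff.2 hmaps
    refine ⟨H.verts.image φ, hsub, φ, ?_, fun a ha b hb => ?_⟩
    · have hverts : (G.induce (H.verts.image φ)).verts = H.verts.image φ :=
        inter_eq_right.2 hsub
      rw [hverts, coe_image]
      exact hinj.bijOn_image
    · exact (hadj a ha b hb).trans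
        ⟨fun h => ⟨h, mem_image_of_mem φ ha, mem_image_of_mem φ hb⟩, And.left⟩

theorem IsEmbedding.comp {H G K : FGraph} {φ ψ : ℕ → ℕ} (hψ : G.IsEmbedding K ψ)
    (hφ : H.IsEmbedding G φ) : H.IsEmbedding K (ψ ∘ φ) :=
  ⟨hψ.1.comp hφ.1 hφ.2.1, hψ.2.1.comp hφ.2.1, fun a ha b hb =>
    (hφ.2.2 a ha b hb).trans (hψ.2.2 _ (hφ.2.1 ha) _ (hφ.2.1 hb))⟩

theorem Le.refl (G : FGraph) : G.Le G :=
  le_iff_exists_isEmbedding.2 ⟨id, Set.injOn_id _, Set.mapsTo_id _, fun _ _ _ _ => Iff.rfl⟩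

theorem Le.trans {H G K : FGraph} (hHG : H.Le G) (hGK : G.Le K) : H.Le K := by
  obtain ⟨φ, hφ⟩ := le_iff_exists_isEmbedding.1 hHG
  obtain ⟨ψ, hψ⟩ := le_iff_exists_isEmbedding.1 hGK
  exact le_iff_exists_isEmbedding.2 ⟨ψ ∘ φ, hψ.comp hφ⟩

theorem Iso.le {H G : FGraph} (h : H.Iso G) : H.Le G := by
  obtain ⟨φ, hbij, hadj⟩ := h
  exact le_iff_exists_isEmbedding.2 ⟨φ, hbij.injOn, hbij.mapsTo, hadj⟩

def shift (G : FGraph) (N : ℕ) : FGraph where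
  verts := G.verts.image (· + N)
  Adj a b := N ≤ a ∧ N ≤ b ∧ G.Adj (a - N) (b - N)
  symm _ _ h := ⟨h.2.1, h.1, G.symm _ _ h.2.2⟩
  loopless a h := G.loopless _ h.2.2
  mem_of_adj a b h := by
    obtain ⟨ha, hb, hab⟩ := h
    obtain ⟨ha', hb'⟩ := G.mem_of_adj _ _ hab
    exact ⟨mem_image.2 ⟨a - N, ha', Nat.sub_add_cancel ha⟩,
      mem_image.2 ⟨b - N, hb', Nat.sub_add_cancel hb⟩⟩

theorem iso_shift (G : FGraph) (N : ℕ) : G.Iso (G.shift N) := by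
  refine ⟨(· + N), ?_, fun a _ b _ => ?_⟩
  · rw [show ((G.shift N).verts : Set ℕ) = (· + N) '' G.verts from coe_image]
    exact (add_left_injective N).injOn.bijOn_image
  · simp [shift]

def union (G H : FGraph) : FGraph where
  verts := G.verts ∪ H.verts
  Adj a b := G.Adj a b ∨ H.Adj a b
  symm _ _ h := h.imp (G.symm _ _) (H.symm _ _)
  loopless a h := h.elim (G.loopless a) (H.loopless a)
  mem_of_adj a b h := h.elim
    (fun h => ⟨mem_union_left _ (G.mem_of_adj a b h).1, mem_union_left _ (G.mem_of_adj a b h).2⟩)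
    (fun h => ⟨mem_union_right _ (H.mem_of_adj a b h).1,
      mem_union_right _ (H.mem_of_adj a b h).2⟩)

variable {G H : FGraph}

theorem isDisjUnion_union (h : Disjoint G.verts H.verts) : IsDisjUnion (G.union H) ![G, H] := by
  refine ⟨fun i j hij => ?_, ?_, fun a b => ?_⟩
  · fin_cases i <;> fin_cases j <;> simp_all [disjoint_comm]
  · ext a; simp [union, Fin.exists_fin_two]
  · simp [union, Fin.exists_fin_two]

theorem le_union_left (h : Disjoint G.verts H.verts) : G.Le (G.union H) :=
  le_iff_exists_isEmbedding.2 ⟨id, Set.injOn_id _, fun _ ha => mem_union_left _ ha,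
    fun _ ha _ _ => ⟨Or.inl, fun hab => hab.resolve_right fun hab' =>
      disjoint_left.1 h ha (H.mem_of_adj _ _ hab').1⟩⟩

theorem le_union_right (h : Disjoint G.verts H.verts) : H.Le (G.union H) :=
  le_iff_exists_isEmbedding.2 ⟨id, Set.injOn_id _, fun _ ha => mem_union_right _ ha,
    fun _ ha _ _ => ⟨Or.inr, fun hab => hab.resolve_left fun hab' =>
      disjoint_right.1 h ha (G.mem_of_adj _ _ hab').1⟩⟩

theorem disjoint_shift (G H : FGraph) : Disjoint G.verts (H.shift (G.verts.sup id + 1)).verts := by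
  refine disjoint_left.2 fun a ha ha' => ?_
  obtain ⟨b, -, rfl⟩ := mem_image.1 ha'
  have : b + (G.verts.sup id + 1) ≤ G.verts.sup id := le_sup (f := id) ha
  omega

open Classical in
noncomputable def edgeFinset (G : FGraph) : Finset (ℕ × ℕ) :=
  (G.verts ×ˢ G.verts).filter fun p => G.Adj p.1 p.2

theorem mem_edgeFinset {a b : ℕ} : (a, b) ∈ G.edgeFinset ↔ G.Adj a b := by
  simpa [edgeFinset] using fun h => G.mem_of_adj a b h

instance : Countable FGraph := by
  refine Function.Injective.countable (f := fun G : FGraph => (G.verts, G.edgeFinset)) ?_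
  intro G H h
  obtain ⟨hV, hE⟩ : G.verts = H.verts ∧ G.edgeFinset = H.edgeFinset := Prod.ext_iff.1 h
  have hA : G.Adj = H.Adj := funext₂ fun a b => propext <| by
    rw [← @mem_edgeFinset G, ← @mem_edgeFinset H, hE]
  cases G; cases H; cases hV; cases hA; rfl

end FGraph

theorem directedOn_le_of_additive {P : Set FGraph} (hiso : ∀ G H, FGraph.Iso G H → G ∈ P → H ∈ P)
    (hadd : Additive' P) : DirectedOn FGraph.Le P := by
  intro G hG H hH
  have hdisj := FGraph.disjoint_shift G H
  exact ⟨_, hadd _ _ _ hG (hiso _ _ (H.iso_shift _) hH) (FGraph.isDisjUnion_union hdisj),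
    FGraph.le_union_left hdisj, (H.iso_shift _).le.trans (FGraph.le_union_right hdisj)⟩

theorem Generates.directedOn {𝒢 P : Set FGraph} (hgen : Generates 𝒢 P)
    (hP : DirectedOn FGraph.Le P) : DirectedOn FGraph.Le 𝒢 := by
  have hsub : 𝒢 ⊆ P := fun G hG => hgen ▸ ⟨G, hG, .refl G⟩
  intro G hG H hH
  obtain ⟨K, hK, hGK, hHK⟩ := hP G (hsub hG) H (hsub hH)
  obtain ⟨L, hL, hKL⟩ : K ∈ gen 𝒢 := hgen ▸ hK
  exact ⟨L, hL, hGK.trans hKL, hHK.trans hKL⟩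

theorem exists_chain_gen_eq_of_directedOn {𝒢 : Set FGraph} (hne : 𝒢.Nonempty)
    (hdir : DirectedOn FGraph.Le 𝒢) :
    ∃ f : ℕ → FGraph, (∀ t, f t ∈ 𝒢) ∧ (∀ t, (f t).Le (f (t + 1))) ∧
      gen (Set.range f) = gen 𝒢 := by
  have : Encodable 𝒢 := Encodable.ofCountable 𝒢
  have : Inhabited 𝒢 := ⟨⟨_, hne.some_mem⟩⟩
  have hd := directedOn_iff_directed.1 hdir
  refine ⟨fun t => hd.sequence _ t, fun t => (hd.sequence _ t).2, hd.sequence_mono_nat, ?_⟩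
  ext G
  constructor
  · rintro ⟨_, ⟨t, rfl⟩, hG⟩
    exact ⟨_, (hd.sequence _ t).2, hG⟩
  · rintro ⟨H, hH, hG⟩
    exact ⟨_, ⟨_, rfl⟩, hG.trans (hd.rel_sequence ⟨H, hH⟩)⟩

theorem statement12 (P : Set FGraph) (hP : IsAIH P)
    (𝒢' : Set FGraph) (hgen : Generates 𝒢' P) :
    ∃ f : ℕ → FGraph, (∀ t, f t ∈ 𝒢') ∧ (∀ t, FGraph.Le (f t) (f (t + 1))) ∧
      Generates (Set.range f) P := by
  obtain ⟨⟨hnull, -, hiso⟩, -, hadd⟩ := hP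
  obtain ⟨G₀, hG₀, -⟩ : nullGraph ∈ gen 𝒢' := hgen ▸ hnull
  obtain ⟨f, hf𝒢, hchain, hf⟩ := exists_chain_gen_eq_of_directedOn ⟨G₀, hG₀⟩
    (hgen.directedOn (directedOn_le_of_additive hiso hadd))
  exact ⟨f, hf𝒢, hchain, hf.trans hgen⟩
end
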